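/- arXiv:0901.0745 — 3 statements merged into one kernel-verified Lean document; each statement's English description precedes it below -/
import Mathlib

section
/- Let 𝕜 be a field, R a commutative 𝕜-algebra, δ a 𝕜-derivation of R, and v : Fin N → R a family of elements. Let f ∈ R satisfy f ∣ δ(f). If there exist scalars c : Fin N → 𝕜 with c(j₀) ≠ 0 for some index j₀ such that f divides Σ_j c(j) • v(j), then f divides the determinant of the N×N matrix whose (i, j) entry is δ^[i](v(j)) (rows indexed by i = 0, …, N−1). -/
/-!
Let `A` be the extactic matrix and `x = c`, viewed in `R`. The `i`-th entry of `A x` is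
`δ^[i] (∑ j, c j • v j)`, and `f` divides it because the ideal `(f)` is `δ`-stable when
`f ∣ δ f`. Multiplying by the adjugate gives `det A • x = adj A (A x)`, so `f` divides
`det A * c j₀`, and `c j₀` is a unit.
-/

open Matrix

theorem Derivation.dvd_iterate_of_dvd {R A : Type*} [CommSemiring R] [CommSemiring A]
    [Algebra R A] (D : Derivation R A A) {f a : A} (hf : f ∣ D f) (ha : f ∣ a) (n : ℕ) :
    f ∣ (⇑D)^[n] a := by
  induction n with
  | zero => exact ha
  | succ n ih =>
    obtain ⟨b, hb⟩ := ih
    rw [Function.iterate_succ_apply', hb, D.leibniz, smul_eq_mul, smul_eq_mul]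
    exact dvd_add (dvd_mul_right f _) (dvd_mul_of_dvd_right hf b)

theorem LinearMap.iterate_sum_smul {R M ι : Type*} [Semiring R] [AddCommMonoid M] [Module R M]
    (φ : M →ₗ[R] M) (s : Finset ι) (c : ι → R) (v : ι → M) (n : ℕ) :
    (⇑φ)^[n] (∑ j ∈ s, c j • v j) = ∑ j ∈ s, c j • (⇑φ)^[n] (v j) := by
  simp only [← Module.End.coe_pow, map_sum, map_smul]

theorem Matrix.dvd_det_mul_of_dvd_mulVec {R n : Type*} [CommRing R] [Fintype n] [DecidableEq n]
    (A : Matrix n n R) (x : n → R) {f : R} (h : ∀ i, f ∣ (A *ᵥ x) i) (j : n) :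
    f ∣ A.det * x j := by
  have hadj : A.det • x = A.adjugate *ᵥ (A *ᵥ x) := by
    rw [mulVec_mulVec, adjugate_mul, smul_mulVec, one_mulVec]
  have := congrFun hadj j
  rw [Pi.smul_apply, smul_eq_mul] at this
  rw [this]
  exact Finset.dvd_sum fun i _ => dvd_mul_of_dvd_right (h i) _

/-- Pereira's Proposition 5, algebraic form: a `δ`-invariant element `f` that divides
some nonzero element of the `𝕜`-span of `v 0, …, v (N-1)` divides the extactic
(Wronskian-type) determinant `det (δ^[i] (v j))`. -/
theorem invariant_divides_extactic_det {𝕜 : Type*} [Field 𝕜] {R : Type*} [CommRing R]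
    [Algebra 𝕜 R] (δ : Derivation 𝕜 R R) {N : ℕ} (v : Fin N → R) (f : R)
    (hf : f ∣ δ f) (c : Fin N → 𝕜) (j₀ : Fin N) (hc : c j₀ ≠ 0)
    (hdvd : f ∣ ∑ j, c j • v j) :
    f ∣ Matrix.det (Matrix.of fun i j : Fin N => (⇑δ)^[(i : ℕ)] (v j)) := by
  set A : Matrix (Fin N) (Fin N) R := Matrix.of fun i j : Fin N => (⇑δ)^[(i : ℕ)] (v j)
  have hAc : ∀ i, (A *ᵥ fun j => algebraMap 𝕜 R (c j)) i = (⇑δ)^[(i : ℕ)] (∑ j, c j • v j) := by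
    intro i
    rw [← Derivation.coeFn_coe, LinearMap.iterate_sum_smul]
    simp only [A, mulVec, dotProduct, of_apply, Derivation.coeFn_coe,
      Algebra.smul_def, mul_comm]
  have hdet : f ∣ A.det * algebraMap 𝕜 R (c j₀) :=
    A.dvd_det_mul_of_dvd_mulVec _ (fun i => hAc i ▸ δ.dvd_iterate_of_dvd hf hdvd i) j₀
  exact ((isUnit_iff_ne_zero.mpr hc).map (algebraMap 𝕜 R)).dvd_mul_right.mp hdet
end

section
/- Let K be a field of characteristic zero and δ a derivation of K (formally, δ : Derivation ℚ K K). For any family v : Fin N → K, the Wronskian determinant det(δ^[i](v(j)))_{0 ≤ i ≤ N−1, 1 ≤ j ≤ N} vanishes if and only if the family v is linearly dependent over the field of constants of δ, i.e., if and only if there exist c : Fin N → K with δ(c(j)) = 0 for all j, c not identically zero, and Σ_j c(j)·v(j) = 0. -/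
/-!
If the Wronskian of `v₀, …, vₙ` vanishes while that of `v₀, …, vₙ₋₁` does not, the kernel of
the Wronskian matrix contains a vector `c` with `cₙ = 1`. Differentiating the relations
`∑ⱼ δⁱ(vⱼ) cⱼ = 0` for `i < n` shows that `δc` is killed by the first `n` rows; as `δcₙ = 0` and
the smaller Wronskian is invertible, `δc = 0`. Induction on `n` covers the case where the smaller
Wronskian vanishes as well. Conversely, a relation with constant coefficients survives
differentiation, hence is a kernel vector of the Wronskian matrix.
-/

open Matrix

namespace Derivation

variable {R K ι : Type*} [CommRing R] [CommRing K] [Algebra R K]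

def wronskianMatrix (δ : Derivation R K K) (m : ℕ) (v : ι → K) : Matrix (Fin m) ι K :=
  of fun i j => (⇑δ)^[i] (v j)

variable [Fintype ι] (δ : Derivation R K K) {m : ℕ} {v c : ι → K}

@[simp]
lemma wronskianMatrix_mulVec_apply (i : Fin m) :
    (δ.wronskianMatrix m v *ᵥ c) i = ∑ j, (⇑δ)^[i] (v j) * c j :=
  rfl

lemma map_sum_iterate_mul (n : ℕ) :
    δ (∑ j, (⇑δ)^[n] (v j) * c j) =
      ∑ j, (⇑δ)^[n] (v j) * δ (c j) + ∑ j, (⇑δ)^[n + 1] (v j) * c j := by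
  simp only [map_sum, leibniz, smul_eq_mul, Function.iterate_succ_apply', ← Finset.sum_add_distrib,
    mul_comm (c _)]

lemma wronskianMatrix_mulVec_eq_zero_of_map_eq_zero (hc : ∀ j, δ (c j) = 0)
    (hv : ∑ j, c j * v j = 0) (m : ℕ) : δ.wronskianMatrix m v *ᵥ c = 0 := by
  suffices ∀ n, ∑ j, (⇑δ)^[n] (v j) * c j = 0 from funext fun i => this i
  intro n
  induction n with
  | zero => simpa [mul_comm] using hv
  | succ n ih => simpa [hc, ih] using (δ.map_sum_iterate_mul (v := v) (c := c) n).symm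

lemma wronskianMatrix_mulVec_map_eq_zero (h : δ.wronskianMatrix (m + 1) v *ᵥ c = 0) :
    δ.wronskianMatrix m v *ᵥ (δ ∘ c) = 0 := by
  funext i
  have hi := congrFun h i.castSucc
  have hsucc := congrFun h i.succ
  simp only [wronskianMatrix_mulVec_apply, Fin.val_castSucc, Fin.val_succ, Pi.zero_apply] at hi hsucc
  have := δ.map_sum_iterate_mul (v := v) (c := c) i
  rw [hi, hsucc, add_zero, map_zero] at this
  exact this.symm

lemma wronskianMatrix_mulVec_eq_zero_of_succ (h : δ.wronskianMatrix (m + 1) v *ᵥ c = 0) :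
    δ.wronskianMatrix m v *ᵥ c = 0 :=
  funext fun i => congrFun h i.castSucc


section Field

variable {R K : Type*} [CommRing R] [Field K] [Algebra R K] (δ : Derivation R K K) {n : ℕ}

lemma eq_zero_of_wronskianMatrix_mulVec_eq_zero {v u : Fin (n + 1) → K}
    (hdet : (δ.wronskianMatrix n (v ∘ Fin.castSucc)).det ≠ 0)
    (hu : δ.wronskianMatrix n v *ᵥ u = 0) (hlast : u (Fin.last n) = 0) : u = 0 := by
  have hinit : δ.wronskianMatrix n (v ∘ Fin.castSucc) *ᵥ (u ∘ Fin.castSucc) = 0 :=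
    funext fun i => by simpa [Fin.sum_univ_castSucc, hlast] using congrFun hu i
  have hinit_zero : u ∘ Fin.castSucc = 0 := by
    by_contra hne
    exact hdet (exists_mulVec_eq_zero_iff.mp ⟨_, hne, hinit⟩)
  exact funext fun j => Fin.lastCases hlast (congrFun hinit_zero) j

lemma exists_const_of_det_wronskianMatrix_eq_zero_of_ne_zero {v : Fin (n + 1) → K}
    (h : (δ.wronskianMatrix (n + 1) v).det = 0)
    (hdet : (δ.wronskianMatrix n (v ∘ Fin.castSucc)).det ≠ 0) :
    ∃ c : Fin (n + 1) → K, (∀ j, δ (c j) = 0) ∧ c ≠ 0 ∧ ∑ j, c j * v j = 0 := by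
  obtain ⟨a, ha, hWa⟩ := exists_mulVec_eq_zero_iff.mpr h
  have ha_last : a (Fin.last n) ≠ 0 := fun h0 =>
    ha (δ.eq_zero_of_wronskianMatrix_mulVec_eq_zero hdet
      (δ.wronskianMatrix_mulVec_eq_zero_of_succ hWa) h0)
  set c := (a (Fin.last n))⁻¹ • a
  have hc_last : c (Fin.last n) = 1 := inv_mul_cancel₀ ha_last
  have hWc : δ.wronskianMatrix (n + 1) v *ᵥ c = 0 := by rw [mulVec_smul, hWa, smul_zero]
  have hδc : δ ∘ c = 0 := δ.eq_zero_of_wronskianMatrix_mulVec_eq_zero hdet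
    (δ.wronskianMatrix_mulVec_map_eq_zero hWc) (by simp [hc_last])
  refine ⟨c, congrFun hδc, fun h0 => one_ne_zero (hc_last ▸ congrFun h0 _), ?_⟩
  simpa [mul_comm] using congrFun hWc 0

theorem exists_const_of_det_wronskianMatrix_eq_zero :
    ∀ {n : ℕ} {v : Fin n → K}, (δ.wronskianMatrix n v).det = 0 →
      ∃ c : Fin n → K, (∀ j, δ (c j) = 0) ∧ c ≠ 0 ∧ ∑ j, c j * v j = 0
  | 0, _, h => by simp at h
  | n + 1, v, h => by
    by_cases hdet : (δ.wronskianMatrix n (v ∘ Fin.castSucc)).det = 0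
    · obtain ⟨c, hc, hc0, hcv⟩ := exists_const_of_det_wronskianMatrix_eq_zero hdet
      refine ⟨Fin.snoc c 0, Fin.lastCases (by simp) (by simpa using hc), ?_, ?_⟩
      · simpa [funext_iff, Fin.forall_fin_succ'] using hc0
      · simpa [Fin.sum_univ_castSucc] using hcv
    · exact δ.exists_const_of_det_wronskianMatrix_eq_zero_of_ne_zero h hdet

end Field

end Derivation

/-- Wronskian criterion over a differential field of characteristic zero: the Wronskian
determinant `det (δ^[i] (v j))` vanishes iff the family `v` is linearly dependent over the
constants of `δ`. -/
theorem wronskian_eq_zero_iff_linearDependent_over_constants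
    {K : Type*} [Field K] [CharZero K] (δ : Derivation ℚ K K) {N : ℕ} (v : Fin N → K) :
    Matrix.det (Matrix.of fun i j : Fin N => (⇑δ)^[(i : ℕ)] (v j)) = 0 ↔
      ∃ c : Fin N → K, (∀ j, δ (c j) = 0) ∧ c ≠ 0 ∧ ∑ j, c j * v j = 0 :=
  ⟨δ.exists_const_of_det_wronskianMatrix_eq_zero, fun ⟨c, hc, hc0, hcv⟩ =>
    exists_mulVec_eq_zero_iff.mp
      ⟨c, hc0, δ.wronskianMatrix_mulVec_eq_zero_of_map_eq_zero hc hcv N⟩⟩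
end

section
/- Let n ≥ 1 and d ≥ 1, and let δ be a ℂ-derivation of ℂ[x₀,…,xₙ] = MvPolynomial (Fin (n+1)) ℂ such that δ(xᵢ) is homogeneous of degree d for every i. Fix k ≥ 1 and let N = C(n+k, k). Then the extactic determinant E_k(δ) = det(δ^[i](m_j))_{0 ≤ i ≤ N−1, 1 ≤ j ≤ N}, where (m_1, …, m_N) is an enumeration of the monomials of degree k in x₀,…,xₙ, is homogeneous of degree k·N + (d−1)·C(N, 2). -/
/-!
Since `δ` raises degrees by `d - 1`, the entry `δ^[i] m_j` is homogeneous of degree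
`k + i (d - 1)`. Hence every term `± ∏ᵢ δ^[σ i] m_i` of the Leibniz expansion of the determinant
is homogeneous of degree `∑ᵢ (k + i (d - 1)) = k N + (d - 1) C(N, 2)`.
-/

open MvPolynomial

namespace MvPolynomial

variable {σ R : Type*}

lemma derivation_eq_sum_pderiv_mul [CommSemiring R] [Fintype σ]
    (D : Derivation R (MvPolynomial σ R) (MvPolynomial σ R)) (p : MvPolynomial σ R) :
    D p = ∑ i, pderiv i p * D (X i) := by
  classical
  have hsum (q : MvPolynomial σ R) :
      (∑ i, D (X i) • pderiv i) q = ∑ i, pderiv i q * D (X i) := by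
    rw [← Derivation.coeFnAddMonoidHom_apply, map_sum, Finset.sum_apply]
    simp [mul_comm]
  rw [← hsum]
  exact Derivation.congr_fun (derivation_ext fun j => by simp [hsum, pderiv_X, Pi.single_apply]) p

/-- The truncated subtraction is harmless at `s = 0`: then `p` is a constant and `D p = 0`. -/
lemma IsHomogeneous.derivation [CommSemiring R] [Fintype σ]
    {D : Derivation R (MvPolynomial σ R) (MvPolynomial σ R)} {d : ℕ}
    (hD : ∀ i, (D (X i)).IsHomogeneous d) {p : MvPolynomial σ R} {s : ℕ}
    (hp : p.IsHomogeneous s) : (D p).IsHomogeneous (s + d - 1) := by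
  obtain _ | s := s
  · rw [totalDegree_eq_zero_iff_eq_C.mp ((totalDegree_zero_iff_isHomogeneous _).mpr hp),
      derivation_C]
    exact isHomogeneous_zero _ _ _
  · rw [derivation_eq_sum_pderiv_mul, show s + 1 + d - 1 = s + 1 - 1 + d by omega]
    exact IsHomogeneous.sum _ _ _ fun i _ => hp.pderiv.mul (hD i)

lemma IsHomogeneous.iterate_derivation [CommSemiring R] [Fintype σ]
    {D : Derivation R (MvPolynomial σ R) (MvPolynomial σ R)} {d : ℕ} (hd : 1 ≤ d)
    (hD : ∀ i, (D (X i)).IsHomogeneous d) {p : MvPolynomial σ R} {s : ℕ}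
    (hp : p.IsHomogeneous s) (i : ℕ) : ((⇑D)^[i] p).IsHomogeneous (s + i * (d - 1)) := by
  induction i with
  | zero => simpa using hp
  | succ i ih =>
    rw [Function.iterate_succ_apply', Nat.succ_mul]
    convert ih.derivation hD using 1
    omega

lemma det_isHomogeneous [CommRing R] {ι : Type*} [Fintype ι] [DecidableEq ι]
    {M : Matrix ι ι (MvPolynomial σ R)} {u v : ι → ℕ}
    (hM : ∀ i j, (M i j).IsHomogeneous (u i + v j)) :
    M.det.IsHomogeneous (∑ i, u i + ∑ j, v j) := by
  rw [Matrix.det_apply]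
  refine IsHomogeneous.sum _ _ _ fun τ _ => ?_
  have hprod : (∏ i, M (τ i) i).IsHomogeneous (∑ i, u i + ∑ j, v j) := by
    rw [← Equiv.sum_comp τ u, ← Finset.sum_add_distrib]
    exact IsHomogeneous.prod _ _ _ fun i _ => hM (τ i) i
  rw [Units.smul_def]
  exact zsmul_mem (show _ ∈ homogeneousSubmodule σ R _ from hprod) _

end MvPolynomial

lemma Fin.sum_univ_val_eq_choose_two (N : ℕ) : ∑ i : Fin N, (i : ℕ) = N.choose 2 := by
  rw [Fin.sum_univ_eq_sum_range (fun i => i) N, Finset.sum_range_id, Nat.choose_two_right]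

theorem extactic_det_isHomogeneous_general (n d k : ℕ) (hd : 1 ≤ d)
    (δ : Derivation ℂ (MvPolynomial (Fin (n + 1)) ℂ) (MvPolynomial (Fin (n + 1)) ℂ))
    (hδ : ∀ i, (δ (MvPolynomial.X i)).IsHomogeneous d)
    (N : ℕ)
    (m : Fin N → {e : Fin (n + 1) →₀ ℕ // ∑ i, e i = k}) :
    (Matrix.det (Matrix.of fun i j : Fin N =>
        (⇑δ)^[(i : ℕ)] (MvPolynomial.monomial (m j).1 (1 : ℂ)))).IsHomogeneous
      (k * N + (d - 1) * N.choose 2) := by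
  have hentry (i j : Fin N) :
      ((⇑δ)^[(i : ℕ)] (monomial (m j).1 (1 : ℂ))).IsHomogeneous (i * (d - 1) + k) := by
    have hmono : (monomial (m j).1 (1 : ℂ)).IsHomogeneous k :=
      isHomogeneous_monomial _ ((m j).1.degree_eq_sum.trans (m j).2)
    exact add_comm k (i * (d - 1)) ▸ hmono.iterate_derivation hd hδ i
  have hdeg :
      k * N + (d - 1) * N.choose 2 = ∑ i : Fin N, (i : ℕ) * (d - 1) + ∑ _j : Fin N, k := by
    rw [← Finset.sum_mul, Fin.sum_univ_val_eq_choose_two, Finset.sum_const, Finset.card_fin,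
      smul_eq_mul]
    ring
  rw [hdeg]
  exact det_isHomogeneous hentry

/-- The extactic determinant `E_k(δ) = det (δ^[i] (m j))`, where `m` enumerates the
`N = C(n+k, k)` monic monomials of degree `k` in `x₀, …, xₙ`, is homogeneous of degree
`k * N + (d - 1) * C(N, 2)` for a derivation `δ` with `δ xᵢ` homogeneous of degree `d`. -/
theorem extactic_det_isHomogeneous (n d k : ℕ) (hn : 1 ≤ n) (hd : 1 ≤ d) (hk : 1 ≤ k)
    (δ : Derivation ℂ (MvPolynomial (Fin (n + 1)) ℂ) (MvPolynomial (Fin (n + 1)) ℂ))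
    (hδ : ∀ i, (δ (MvPolynomial.X i)).IsHomogeneous d)
    (N : ℕ) (hN : N = (n + k).choose k)
    (m : Fin N → {e : Fin (n + 1) →₀ ℕ // ∑ i, e i = k}) (hm : Function.Bijective m) :
    (Matrix.det (Matrix.of fun i j : Fin N =>
        (⇑δ)^[(i : ℕ)] (MvPolynomial.monomial (m j).1 (1 : ℂ)))).IsHomogeneous
      (k * N + (d - 1) * N.choose 2) :=
  extactic_det_isHomogeneous_general n d k hd δ hδ N m
end
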